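/- arXiv:1006.2924 — 4 statements merged into one kernel-verified Lean document; each statement's English description precedes it below -/
import Mathlib

section
/- The formal power series U(z) defined by the functional equation (z² + 2z)·U(z)² − (z² + 3z + 1)·U(z) + (1+z)² = 0 with U(0) = 1 has nonnegative integer coefficients. -/
/-!
With `U = 1 + V` the equation becomes `V = z · ((1 + z)(1 + V) + (z + 2) V²)`, a fixed-point
equation whose right-hand side has natural-number coefficients. The coefficient of `z^(n+1)` on
the right involves only coefficients of `V` of degree at most `n`, so by induction every
coefficient of `V`, hence of `U`, is a natural number.
-/

open PowerSeries Finset.HasAntidiagonal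

namespace PowerSeries

variable {R : Type*} [Semiring R]

def lowCoeffsIn (A : Subsemiring R) (n : ℕ) : Subsemiring R⟦X⟧ where
  carrier := {f | ∀ k ≤ n, coeff k f ∈ A}
  zero_mem' _ _ := by simp [A.zero_mem]
  one_mem' k _ := by
    rw [coeff_one]
    split_ifs
    exacts [A.one_mem, A.zero_mem]
  add_mem' hf hg k hk := by
    simpa only [map_add] using A.add_mem (hf k hk) (hg k hk)
  mul_mem' {f g} hf hg k hk := by
    rw [coeff_mul]
    exact A.sum_mem fun p hp =>
      A.mul_mem (hf p.1 ((antidiagonal.fst_le hp).trans hk))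
        (hg p.2 ((antidiagonal.snd_le hp).trans hk))

variable {A : Subsemiring R}

theorem X_mem_lowCoeffsIn (n : ℕ) : (X : R⟦X⟧) ∈ lowCoeffsIn A n := fun k _ => by
  rw [coeff_X]
  split_ifs
  exacts [A.one_mem, A.zero_mem]

theorem X_mul_mem_lowCoeffsIn_succ {f : R⟦X⟧} {n : ℕ} (hf : f ∈ lowCoeffsIn A n) :
    X * f ∈ lowCoeffsIn A (n + 1) := by
  rintro (_ | k) hk
  · simp [A.zero_mem]
  · rw [coeff_succ_X_mul]
    exact hf k (by omega)

theorem mem_lowCoeffsIn_of_eq_X_mul {f : R⟦X⟧} (F : R⟦X⟧ → R⟦X⟧)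
    (hF : ∀ n g, g ∈ lowCoeffsIn A n → F g ∈ lowCoeffsIn A n) (hf : f = X * F f) (n : ℕ) :
    f ∈ lowCoeffsIn A n := by
  induction n with
  | zero =>
    rintro _ hk
    rw [Nat.le_zero.mp hk, hf, coeff_zero_X_mul]
    exact A.zero_mem
  | succ n ih =>
    rw [hf]
    exact X_mul_mem_lowCoeffsIn_succ (hF n f ih)

end PowerSeries

theorem shapes_gf_nonneg_integer_coefficients_general (U : PowerSeries ℚ)
    (hU : (PowerSeries.X ^ 2 + 2 * PowerSeries.X) * U ^ 2
        - (PowerSeries.X ^ 2 + 3 * PowerSeries.X + 1) * U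
        + (1 + PowerSeries.X) ^ 2 = 0) :
    ∀ l : ℕ, ∃ m : ℕ, PowerSeries.coeff l U = (m : ℚ) := by
  set F : ℚ⟦X⟧ → ℚ⟦X⟧ := fun V => (1 + X) * (1 + V) + (X + 2) * V ^ 2
  have hF (n : ℕ) (V : ℚ⟦X⟧) (hV : V ∈ lowCoeffsIn (⊥ : Subsemiring ℚ) n) :
      F V ∈ lowCoeffsIn ⊥ n := by
    have hX : X ∈ lowCoeffsIn (⊥ : Subsemiring ℚ) n := X_mem_lowCoeffsIn n
    exact add_mem (mul_mem (add_mem (one_mem _) hX) (add_mem (one_mem _) hV))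
      (mul_mem (add_mem hX (ofNat_mem _ 2)) (pow_mem hV 2))
  have hV : U - 1 = X * F (U - 1) := by linear_combination -hU
  intro l
  have hUl : U ∈ lowCoeffsIn (⊥ : Subsemiring ℚ) l :=
    sub_add_cancel U 1 ▸ add_mem (mem_lowCoeffsIn_of_eq_X_mul F hF hV l) (one_mem _)
  obtain ⟨m, hm⟩ := Subsemiring.mem_bot.mp (hUl l le_rfl)
  exact ⟨m, hm.symm⟩

/-- The formal power series `U(z)` determined by
`(z²+2z)U² − (z²+3z+1)U + (1+z)² = 0` with `U(0) = 1` has nonnegative integer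
coefficients. -/
theorem shapes_gf_nonneg_integer_coefficients (U : PowerSeries ℚ)
    (hU : (PowerSeries.X ^ 2 + 2 * PowerSeries.X) * U ^ 2
        - (PowerSeries.X ^ 2 + 3 * PowerSeries.X + 1) * U
        + (1 + PowerSeries.X) ^ 2 = 0)
    (h0 : PowerSeries.constantCoeff U = 1) :
    ∀ l : ℕ, ∃ m : ℕ, PowerSeries.coeff l U = (m : ℚ) :=
  shapes_gf_nonneg_integer_coefficients_general U hU
end

section
/- If f(z) is a power series with nonnegative real coefficients and radius of convergence R with 0 < R < ∞, then z = R is a singularity of f (Pringsheim's theorem). -/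
/-! If `f(z) = ∑ aₙ zⁿ` extended analytically to a disc around `R`, pick `0 ≤ x < R` close to `R`.
Expanding each `aₙ (x + w)ⁿ` binomially shows that the Taylor coefficients of `f` at `x` are
`∑ₙ aₙ (n choose k) x^(n-k) ≥ 0`. The extension is holomorphic on a disc around `x` reaching
beyond `R`, so by the Cauchy integral formula its Taylor series at `x` converges at some real
`x + δ > R`. All terms `aₙ (n choose k) x^(n-k) δ^k` of the resulting double series are
nonnegative, so summing it the other way round shows that `∑ aₙ (x + δ)ⁿ` converges,
contradicting `R < x + δ`. -/

open Finset FormalMultilinearSeries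
open scoped NNReal

section TaylorExpansion

variable {𝕜 : Type*} [RCLike 𝕜]

/-- Since `n.choose k = 0` for `k > n`, the truncated exponent `n - k` is harmless. -/
def taylorTerm (a : ℕ → 𝕜) (x w : 𝕜) (p : ℕ × ℕ) : 𝕜 :=
  a p.1 * p.1.choose p.2 * x ^ (p.1 - p.2) * w ^ p.2

noncomputable def taylorCoeff (a : ℕ → 𝕜) (x : 𝕜) (k : ℕ) : 𝕜 :=
  ∑' n, a n * n.choose k * x ^ (n - k)

lemma hasSum_taylorTerm_fst (a : ℕ → 𝕜) (x w : 𝕜) (n : ℕ) :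
    HasSum (fun k => taylorTerm a x w (n, k)) (a n * (x + w) ^ n) := by
  have hzero : ∀ k ∉ range (n + 1), taylorTerm a x w (n, k) = 0 := fun k hk => by
    rw [mem_range, not_lt] at hk
    simp [taylorTerm, Nat.choose_eq_zero_of_lt (Nat.lt_of_succ_le hk)]
  have hbinom : ∑ k ∈ range (n + 1), taylorTerm a x w (n, k) = a n * (x + w) ^ n := by
    rw [add_comm x w, add_pow, mul_sum]
    refine sum_congr rfl fun k _ => ?_
    simp only [taylorTerm]
    ring
  exact hbinom ▸ hasSum_sum_of_ne_finset_zero hzero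

lemma norm_taylorTerm (a : ℕ → 𝕜) (x w : 𝕜) (p : ℕ × ℕ) :
    ‖taylorTerm a x w p‖ = taylorTerm (fun n => ‖a n‖) ‖x‖ ‖w‖ p := by
  simp [taylorTerm]

lemma taylorTerm_nonneg {a : ℕ → ℝ} (ha : ∀ n, 0 ≤ a n) {x w : ℝ} (hx : 0 ≤ x) (hw : 0 ≤ w)
    (p : ℕ × ℕ) : 0 ≤ taylorTerm a x w p := by
  unfold taylorTerm
  have := ha p.1
  positivity

lemma summable_taylorTerm_iff {a : ℕ → ℝ} (ha : ∀ n, 0 ≤ a n) {x w : ℝ} (hx : 0 ≤ x)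
    (hw : 0 ≤ w) : Summable (taylorTerm a x w) ↔ Summable fun n => a n * (x + w) ^ n := by
  simp only [summable_prod_of_nonneg (taylorTerm_nonneg ha hx hw),
    fun n => (hasSum_taylorTerm_fst a x w n).tsum_eq,
    fun n => (hasSum_taylorTerm_fst a x w n).summable, implies_true, true_and]

lemma summable_of_summable_taylorCoeff_mul_pow {a : ℕ → ℝ} (ha : ∀ n, 0 ≤ a n) {x w : ℝ}
    (hx : 0 ≤ x) (hw : 0 ≤ w) (hsec : ∀ k, Summable fun n => a n * n.choose k * x ^ (n - k))
    (h : Summable fun k => taylorCoeff a x k * w ^ k) :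
    Summable fun n => a n * (x + w) ^ n := by
  rw [← summable_taylorTerm_iff ha hx hw]
  have hswap : Summable fun p : ℕ × ℕ => taylorTerm a x w p.swap := by
    refine (summable_prod_of_nonneg fun p => taylorTerm_nonneg ha hx hw _).mpr
      ⟨fun k => (hsec k).mul_right (w ^ k), ?_⟩
    simpa only [taylorTerm, Prod.swap, taylorCoeff, ← tsum_mul_right] using h
  exact hswap.prod_symm

lemma summable_taylorTerm_of_summable {a : ℕ → 𝕜} {x w : 𝕜}
    (hs : Summable fun n => ‖a n‖ * (‖x‖ + ‖w‖) ^ n) : Summable (taylorTerm a x w) := by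
  refine Summable.of_norm ?_
  simp only [norm_taylorTerm]
  exact (summable_taylorTerm_iff (fun n => norm_nonneg (a n)) (norm_nonneg x)
    (norm_nonneg w)).mpr hs

lemma summable_taylorCoeff_summand {a : ℕ → 𝕜} {x : 𝕜} {r : ℝ}
    (hs : Summable fun n => ‖a n‖ * r ^ n) (hx : ‖x‖ < r) (k : ℕ) :
    Summable fun n => a n * n.choose k * x ^ (n - k) := by
  set w : 𝕜 := ((r - ‖x‖ : ℝ) : 𝕜)
  have hw : ‖w‖ = r - ‖x‖ := by
    rw [RCLike.norm_ofReal, abs_of_pos (sub_pos.mpr hx)]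
  have hT : Summable (taylorTerm a x w) :=
    summable_taylorTerm_of_summable (by rwa [hw, add_sub_cancel])
  have hwk : w ^ k ≠ 0 := pow_ne_zero k (norm_pos_iff.mp (hw ▸ sub_pos.mpr hx))
  exact (summable_mul_right_iff hwk).mp (hT.prod_symm.prod_factor k)

lemma hasSum_taylorCoeff_mul_pow {a : ℕ → 𝕜} {x w : 𝕜}
    (hs : Summable fun n => ‖a n‖ * (‖x‖ + ‖w‖) ^ n) :
    HasSum (fun k => taylorCoeff a x k * w ^ k) (∑' n, a n * (x + w) ^ n) := by
  have hT := summable_taylorTerm_of_summable hs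
  have hrows : HasSum (fun n => a n * (x + w) ^ n) (∑' p, taylorTerm a x w p) :=
    hT.hasSum.prod_fiberwise (hasSum_taylorTerm_fst a x w)
  have hcols : HasSum (fun k => taylorCoeff a x k * w ^ k) (∑' p, taylorTerm a x w p) := by
    rw [← (Equiv.prodComm ℕ ℕ).tsum_eq]
    refine hT.prod_symm.hasSum.prod_fiberwise fun k => ?_
    rw [taylorCoeff, ← tsum_mul_right]
    exact (hT.prod_symm.prod_factor k).hasSum
  rwa [hrows.tsum_eq]

lemma hasFPowerSeriesAt_taylorCoeff {a : ℕ → 𝕜} {x : 𝕜} {r : ℝ}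
    (hs : Summable fun n => ‖a n‖ * r ^ n) (hx : ‖x‖ < r) {g : 𝕜 → 𝕜}
    (hg : ∀ z, ‖z‖ < r → g z = ∑' n, a n * z ^ n) :
    HasFPowerSeriesAt g (ofScalars 𝕜 (taylorCoeff a x)) x := by
  rw [hasFPowerSeriesAt_iff]
  filter_upwards [Metric.ball_mem_nhds (0 : 𝕜) (sub_pos.mpr hx)] with w hw
  rw [mem_ball_zero_iff] at hw
  have hxw : ‖x‖ + ‖w‖ < r := by linarith
  have hsw : Summable fun n => ‖a n‖ * (‖x‖ + ‖w‖) ^ n :=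
    hs.of_nonneg_of_le (fun n => by positivity) fun n => by gcongr
  rw [hg _ ((norm_add_le x w).trans_lt hxw)]
  simpa only [coeff_ofScalars, smul_eq_mul, mul_comm] using hasSum_taylorCoeff_mul_pow hsw

end TaylorExpansion

theorem HasFPowerSeriesAt.hasFPowerSeriesOnBall_of_differentiableOn {E : Type*}
    [NormedAddCommGroup E] [NormedSpace ℂ E] [CompleteSpace E] {g : ℂ → E}
    {p : FormalMultilinearSeries ℂ ℂ E} {c : ℂ} {s : ℝ≥0} (hp : HasFPowerSeriesAt g p c)
    (hd : DifferentiableOn ℂ g (Metric.closedBall c s)) (hs : 0 < s) :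
    HasFPowerSeriesOnBall g p c s := by
  have hq := hd.hasFPowerSeriesOnBall hs
  rwa [hp.eq_formalMultilinearSeries hq.hasFPowerSeriesAt]

lemma taylorCoeff_ofReal (a : ℕ → ℝ) (x : ℝ) (k : ℕ) :
    taylorCoeff (fun n => (a n : ℂ)) x k = taylorCoeff a x k := by
  simp only [taylorCoeff, Complex.ofReal_tsum]
  push_cast
  rfl

lemma summable_taylorCoeff_mul_pow_of_hasFPowerSeriesOnBall {a : ℕ → ℝ} {x δ : ℝ} {g : ℂ → ℂ}
    {s : ℝ≥0} (hg : HasFPowerSeriesOnBall g (ofScalars ℂ (taylorCoeff (fun n => (a n : ℂ)) x)) x s)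
    (hδ : |δ| < s) : Summable fun k => taylorCoeff a x k * δ ^ k := by
  have hmem : (δ : ℂ) ∈ Metric.eball (0 : ℂ) s := by
    rwa [Metric.mem_eball, edist_zero_right, enorm_eq_nnnorm, ENNReal.coe_lt_coe,
      ← NNReal.coe_lt_coe, coe_nnnorm, Complex.norm_real, Real.norm_eq_abs]
  have hsum := (hg.hasSum hmem).summable
  simp only [ofScalars_apply_eq, taylorCoeff_ofReal, smul_eq_mul] at hsum
  exact Complex.summable_ofReal.mp (by exact_mod_cast hsum)

/-- Pringsheim's theorem: if `f(z) = Σ aₙ zⁿ` has nonnegative real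
coefficients and radius of convergence `R` with `0 < R < ∞`, then `z = R` is a
singularity of `f`: there is no function analytic at `R` agreeing with `f`
on the disc of convergence. -/
theorem pringsheim (a : ℕ → ℝ) (R : ℝ) (ha : ∀ n, 0 ≤ a n)
    (hR : 0 < R)
    (hconv : ∀ r : ℝ, 0 < r → r < R → Summable fun n => a n * r ^ n)
    (hdiv : ∀ r : ℝ, R < r → ¬ Summable fun n => a n * r ^ n) :
    ¬ ∃ g : ℂ → ℂ, AnalyticAt ℂ g (R : ℂ) ∧
        ∀ z : ℂ, ‖z‖ < R → g z = ∑' n : ℕ, (a n : ℂ) * z ^ n := by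
  rintro ⟨g, hg, hgf⟩
  obtain ⟨ρ, hρ, hgρ⟩ := hg.exists_ball_analyticOnNhd
  obtain ⟨x, hx0, hxR, hRx⟩ : ∃ x : ℝ, 0 ≤ x ∧ x < R ∧ R - x ≤ ρ / 4 :=
    ⟨max 0 (R - ρ / 4), le_max_left _ _, max_lt hR (by linarith), by
      linarith [le_max_right 0 (R - ρ / 4)]⟩
  obtain ⟨r, hxr, hrR⟩ := exists_between hxR
  have hs : ((ρ / 2).toNNReal : ℝ) = ρ / 2 := Real.coe_toNNReal _ (by positivity)
  have hsum : Summable fun n => ‖a n‖ * r ^ n := by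
    simpa only [Real.norm_of_nonneg (ha _)] using hconv r (by linarith) hrR
  have hxnorm : ‖x‖ < r := by rwa [Real.norm_of_nonneg hx0]
  have hgx : HasFPowerSeriesAt g (ofScalars ℂ (taylorCoeff (fun n => (a n : ℂ)) x)) x :=
    hasFPowerSeriesAt_taylorCoeff (by simpa only [Complex.norm_real] using hsum)
      (by rwa [Complex.norm_real]) fun z hz => hgf z (hz.trans hrR)
  have hdisc : Metric.closedBall (x : ℂ) (ρ / 2).toNNReal ⊆ Metric.ball (R : ℂ) ρ := by
    refine Metric.closedBall_subset_ball' ?_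
    rw [hs, Complex.isometry_ofReal.dist_eq, Real.dist_eq, abs_of_neg (by linarith)]
    linarith
  have hball := hgx.hasFPowerSeriesOnBall_of_differentiableOn
    (hgρ.differentiableOn.mono hdisc) (by simpa using hρ)
  have hcoeff := summable_taylorCoeff_mul_pow_of_hasFPowerSeriesOnBall hball
    (δ := 3 * ρ / 8) (by rw [hs, abs_of_pos (by positivity)]; linarith)
  exact hdiv (x + 3 * ρ / 8) (by linarith) (summable_of_summable_taylorCoeff_mul_pow ha hx0
    (by positivity) (summable_taylorCoeff_summand hsum hxnorm) hcoeff)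
end

section
/- The power series U(z) = (1+3z+z² − √(1−2z−9z²−10z³−3z⁴))/(2z(z+2)) admits, as z → ρ (the minimal positive root of 1−2z−9z²−10z³−3z⁴), a singular expansion of the form U(z) = u₀ + u₁(ρ−z)^{1/2}(1+o(1)) for some real constants u₀ and u₁ ≠ 0. -/
open Filter Topology

/-!
Since `ρ` is a root, `p(z) = 1 − 2z − 9z² − 10z³ − 3z⁴ = (ρ − z) q(z)` with `q` a cubic whose
coefficients are positive for `ρ > 0`, so `√p = √(ρ − z) √q`. The remaining part of `U` is
differentiable at `ρ`, so its increment is `O(ρ − z) = o(√(ρ − z))`, and the coefficient of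
`√(ρ − z)` tends to `−√(q ρ) / (2ρ(ρ + 2)) ≠ 0`.
-/

theorem DifferentiableAt.tendsto_sub_div_sqrt_nhdsLT {φ : ℝ → ℝ} {ρ : ℝ}
    (h : DifferentiableAt ℝ φ ρ) :
    Tendsto (fun z => (φ z - φ ρ) / √(ρ - z)) (𝓝[<] ρ) (𝓝 0) := by
  have hslope : Tendsto (slope φ ρ) (𝓝[<] ρ) (𝓝 (deriv φ ρ)) :=
    h.hasDerivAt.tendsto_slope.mono_left (nhdsWithin_mono _ fun _ hz => ne_of_lt hz)
  have hsqrt : Tendsto (fun z => √(ρ - z)) (𝓝[<] ρ) (𝓝 0) := by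
    have : ContinuousAt (fun z => √(ρ - z)) ρ := by fun_prop
    simpa using this.tendsto.mono_left nhdsWithin_le_nhds
  have hprod := (hslope.mul hsqrt).neg
  rw [mul_zero, neg_zero] at hprod
  refine hprod.congr' ?_
  filter_upwards [self_mem_nhdsWithin] with z (hz : z < ρ)
  have hpos : 0 < ρ - z := sub_pos.mpr hz
  have hs : √(ρ - z) ≠ 0 := (Real.sqrt_pos.mpr hpos).ne'
  have hne : z - ρ ≠ 0 := (sub_neg.mpr hz).ne
  have hsq : √(ρ - z) ^ 2 = ρ - z := Real.sq_sqrt hpos.le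
  rw [slope_def_field, eq_div_iff hs]
  field_simp
  linear_combination (φ ρ - φ z) * hsq

theorem tendsto_sqrt_singular_coeff_nhdsLT {a d q : ℝ → ℝ} {ρ : ℝ}
    (ha : DifferentiableAt ℝ a ρ) (hd : DifferentiableAt ℝ d ρ) (hdρ : d ρ ≠ 0)
    (hq : ContinuousAt q ρ) :
    Tendsto (fun z => ((a z - √((ρ - z) * q z)) / d z - a ρ / d ρ) / √(ρ - z))
      (𝓝[<] ρ) (𝓝 (-√(q ρ) / d ρ)) := by
  have hreg := (ha.div hd hdρ).tendsto_sub_div_sqrt_nhdsLT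
  have hrad : Tendsto (fun z => √(q z) / d z) (𝓝[<] ρ) (𝓝 (√(q ρ) / d ρ)) :=
    (hq.sqrt.div hd.continuousAt hdρ).tendsto.mono_left nhdsWithin_le_nhds
  rw [neg_div, ← zero_sub]
  refine (hreg.sub hrad).congr' ?_
  filter_upwards [self_mem_nhdsWithin] with z (hz : z < ρ)
  have hpos : 0 < ρ - z := sub_pos.mpr hz
  have hs : √(ρ - z) ≠ 0 := (Real.sqrt_pos.mpr hpos).ne'
  rw [Real.sqrt_mul hpos.le, Pi.div_apply, Pi.div_apply, ← mul_div_cancel_left₀ (√(q z) / d z) hs,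
    ← sub_div]
  ring

theorem shapes_gf_singular_expansion_general (ρ : ℝ)
    (hρ : ρ ∈ Set.Ioc (0 : ℝ) (1 / 4))
    (hroot : 1 - 2 * ρ - 9 * ρ ^ 2 - 10 * ρ ^ 3 - 3 * ρ ^ 4 = 0) :
    let U : ℝ → ℝ := fun z => (1 + 3 * z + z ^ 2 -
      Real.sqrt (1 - 2 * z - 9 * z ^ 2 - 10 * z ^ 3 - 3 * z ^ 4)) /
        (2 * z * (z + 2))
    ∃ u₀ u₁ : ℝ, u₁ ≠ 0 ∧
      Filter.Tendsto (fun z => (U z - u₀) / Real.sqrt (ρ - z))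
        (nhdsWithin ρ (Set.Iio ρ)) (nhds u₁) := by
  intro U
  have hρ0 : 0 < ρ := hρ.1
  set q : ℝ → ℝ := fun z => 2 + 9 * (z + ρ) + 10 * (z ^ 2 + z * ρ + ρ ^ 2)
      + 3 * (z ^ 3 + z ^ 2 * ρ + z * ρ ^ 2 + ρ ^ 3)
  have hfactor : ∀ z : ℝ, 1 - 2 * z - 9 * z ^ 2 - 10 * z ^ 3 - 3 * z ^ 4 = (ρ - z) * q z :=
    fun z => by linear_combination hroot
  have hdρ : 2 * ρ * (ρ + 2) ≠ 0 := by positivity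
  refine ⟨(1 + 3 * ρ + ρ ^ 2) / (2 * ρ * (ρ + 2)), -√(q ρ) / (2 * ρ * (ρ + 2)), ?_, ?_⟩
  · have hqρ : 0 < q ρ := by positivity
    exact div_ne_zero (neg_ne_zero.mpr (Real.sqrt_pos.mpr hqρ).ne') hdρ
  · simp only [U, hfactor]
    exact tendsto_sqrt_singular_coeff_nhdsLT (a := fun z => 1 + 3 * z + z ^ 2)
      (d := fun z => 2 * z * (z + 2)) (by fun_prop) (by fun_prop) hdρ (by fun_prop)

/-- The function `U(z) = (1+3z+z² − √(1−2z−9z²−10z³−3z⁴))/(2z(z+2))` has a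
square-root singular expansion `U(z) = u₀ + u₁(ρ−z)^{1/2}(1+o(1))` as
`z → ρ⁻`, where `ρ` is the minimal positive root of `1−2z−9z²−10z³−3z⁴`
and `u₁ ≠ 0`. -/
theorem shapes_gf_singular_expansion (ρ : ℝ)
    (hρ : ρ ∈ Set.Ioc (0 : ℝ) (1 / 4))
    (hroot : 1 - 2 * ρ - 9 * ρ ^ 2 - 10 * ρ ^ 3 - 3 * ρ ^ 4 = 0)
    (hmin : ∀ z ∈ Set.Ioo (0 : ℝ) ρ,
      1 - 2 * z - 9 * z ^ 2 - 10 * z ^ 3 - 3 * z ^ 4 ≠ 0) :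
    let U : ℝ → ℝ := fun z => (1 + 3 * z + z ^ 2 -
      Real.sqrt (1 - 2 * z - 9 * z ^ 2 - 10 * z ^ 3 - 3 * z ^ 4)) /
        (2 * z * (z + 2))
    ∃ u₀ u₁ : ℝ, u₁ ≠ 0 ∧
      Filter.Tendsto (fun z => (U z - u₀) / Real.sqrt (ρ - z))
        (nhdsWithin ρ (Set.Iio ρ)) (nhds u₁) :=
  shapes_gf_singular_expansion_general ρ hρ hroot
end

section
/- The equation ζ(z) = ρ, where ζ(z) = z²T_1(z)²/(1 − z² − z²(T_1(z)²−1)), T_1(z) is the secondary-structure generating function, and ρ is the minimal positive root of 1−2z−9z²−10z³−3z⁴, has a unique solution γ₁ in (0, r), where r is the radius of convergence of T_1, and γ₁⁻¹ lies in the interval (3.487, 3.488). -/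
/-- `T₁(z) = (1 − z + z² − √(1−2z−z²−2z³+z⁴))/(2z²)`, the secondary-structure
generating function. -/
noncomputable def T1 (z : ℝ) : ℝ :=
  (1 - z + z ^ 2 - Real.sqrt (1 - 2 * z - z ^ 2 - 2 * z ^ 3 + z ^ 4)) /
    (2 * z ^ 2)

/-- `ζ(z) = z²T₁(z)²/(1 − z² − z²(T₁(z)²−1))`. -/
noncomputable def zeta1 (z : ℝ) : ℝ :=
  z ^ 2 * T1 z ^ 2 / (1 - z ^ 2 - z ^ 2 * (T1 z ^ 2 - 1))

set_option maxHeartbeats 2000000 in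
/-- The equation `ζ(z) = ρ` has a unique solution `γ₁ ∈ (0, r)`, where `r` is
the minimal positive root of `1−2z−z²−2z³+z⁴` (the radius of convergence of
`T₁`) and `ρ` is the minimal positive root of `1−2z−9z²−10z³−3z⁴`; moreover
`γ₁⁻¹ ∈ (3.487, 3.488)`. -/
theorem zeta_eq_rho_unique_solution (r ρ : ℝ)
    (hr : 0 < r) (hrroot : 1 - 2 * r - r ^ 2 - 2 * r ^ 3 + r ^ 4 = 0)
    (hrmin : ∀ z ∈ Set.Ioo (0 : ℝ) r,
      1 - 2 * z - z ^ 2 - 2 * z ^ 3 + z ^ 4 ≠ 0)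
    (hρ : ρ ∈ Set.Ioc (0 : ℝ) (1 / 4))
    (hρroot : 1 - 2 * ρ - 9 * ρ ^ 2 - 10 * ρ ^ 3 - 3 * ρ ^ 4 = 0)
    (hρmin : ∀ z ∈ Set.Ioo (0 : ℝ) ρ,
      1 - 2 * z - 9 * z ^ 2 - 10 * z ^ 3 - 3 * z ^ 4 ≠ 0) :
    ∃ γ : ℝ, γ ∈ Set.Ioo (0 : ℝ) r ∧ zeta1 γ = ρ ∧
      (∀ γ' ∈ Set.Ioo (0 : ℝ) r, zeta1 γ' = ρ → γ' = γ) ∧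
      3.487 < γ⁻¹ ∧ γ⁻¹ < 3.488 := by
  obtain ⟨hρ0, hρ4⟩ := hρ
  -- numerical bounds on ρ
  have hρlb : (0.2214 : ℝ) < ρ := by
    by_contra h
    push_neg at h
    nlinarith [pow_pos hρ0 2, pow_pos hρ0 3, pow_pos hρ0 4, sq_nonneg ρ]
  have hρub : ρ < (0.2215 : ℝ) := by
    by_contra h
    push_neg at h
    have hc : ContinuousOn (fun z : ℝ => 1 - 2 * z - 9 * z ^ 2 - 10 * z ^ 3 - 3 * z ^ 4)
        (Set.Icc (0 : ℝ) 0.2215) := by fun_prop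
    have h0 : (0 : ℝ) ∈ Set.Ioo ((fun z : ℝ => 1 - 2 * z - 9 * z ^ 2 - 10 * z ^ 3 - 3 * z ^ 4) 0.2215)
        ((fun z : ℝ => 1 - 2 * z - 9 * z ^ 2 - 10 * z ^ 3 - 3 * z ^ 4) 0) := by
      constructor <;> norm_num
    obtain ⟨ξ, hξmem, hξ0⟩ := intermediate_value_Ioo' (by norm_num : (0:ℝ) ≤ 0.2215) hc h0
    exact hρmin ξ ⟨hξmem.1, lt_of_lt_of_le hξmem.2 h⟩ hξ0
  -- numerical bounds on r
  have hr03 : (0.3 : ℝ) < r := by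
    by_contra h
    push_neg at h
    nlinarith [pow_pos hr 2, pow_pos hr 3, pow_pos hr 4]
  have hr05 : r < (0.5 : ℝ) := by
    by_contra h
    push_neg at h
    have hc : ContinuousOn (fun z : ℝ => 1 - 2 * z - z ^ 2 - 2 * z ^ 3 + z ^ 4)
        (Set.Icc (0 : ℝ) 0.5) := by fun_prop
    have h0 : (0 : ℝ) ∈ Set.Ioo ((fun z : ℝ => 1 - 2 * z - z ^ 2 - 2 * z ^ 3 + z ^ 4) 0.5)
        ((fun z : ℝ => 1 - 2 * z - z ^ 2 - 2 * z ^ 3 + z ^ 4) 0) := by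
      constructor <;> norm_num
    obtain ⟨ξ, hξmem, hξ0⟩ := intermediate_value_Ioo' (by norm_num : (0:ℝ) ≤ 0.5) hc h0
    exact hrmin ξ ⟨hξmem.1, lt_of_lt_of_le hξmem.2 h⟩ hξ0
  -- positivity of the discriminant on (0, r)
  have hΔpos : ∀ z ∈ Set.Ioo (0 : ℝ) r, 0 < 1 - 2 * z - z ^ 2 - 2 * z ^ 3 + z ^ 4 := by
    intro z hz
    by_contra h
    push_neg at h
    have hne := hrmin z hz
    have hlt : 1 - 2 * z - z ^ 2 - 2 * z ^ 3 + z ^ 4 < 0 := lt_of_le_of_ne h hne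
    have hc : ContinuousOn (fun t : ℝ => 1 - 2 * t - t ^ 2 - 2 * t ^ 3 + t ^ 4)
        (Set.Icc (0 : ℝ) z) := by fun_prop
    have h0 : (0 : ℝ) ∈ Set.Ioo ((fun t : ℝ => 1 - 2 * t - t ^ 2 - 2 * t ^ 3 + t ^ 4) z)
        ((fun t : ℝ => 1 - 2 * t - t ^ 2 - 2 * t ^ 3 + t ^ 4) 0) := by
      refine ⟨hlt, by norm_num⟩
    obtain ⟨ξ, hξmem, hξ0⟩ := intermediate_value_Ioo' hz.1.le hc h0
    exact hrmin ξ ⟨hξmem.1, hξmem.2.trans hz.2⟩ hξ0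
  -- key equivalence : for z ∈ (0, r), zeta1 z = ρ ↔ P z = 0
  have hkey : ∀ z ∈ Set.Ioo (0 : ℝ) r,
      (zeta1 z = ρ ↔ ρ * (1 + ρ) * (1 - z + z ^ 2) ^ 2 = (1 + 2 * ρ) ^ 2 * z ^ 2) := by
    intro z hz
    obtain ⟨hz0, hzr⟩ := hz
    have hΔ : 0 < 1 - 2 * z - z ^ 2 - 2 * z ^ 3 + z ^ 4 := hΔpos z ⟨hz0, hzr⟩
    obtain ⟨A, hA⟩ : ∃ A : ℝ, A = 1 - z + z ^ 2 := ⟨_, rfl⟩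
    obtain ⟨s, hs⟩ : ∃ s : ℝ, s = Real.sqrt (1 - 2 * z - z ^ 2 - 2 * z ^ 3 + z ^ 4) := ⟨_, rfl⟩
    have hs0 : 0 ≤ s := hs ▸ Real.sqrt_nonneg _
    have hs2 : s ^ 2 = 1 - 2 * z - z ^ 2 - 2 * z ^ 3 + z ^ 4 := by
      rw [hs]; exact Real.sq_sqrt hΔ.le
    have hApos : 0 < A := by rw [hA]; nlinarith [sq_nonneg (1 - z)]
    have hAs : s ^ 2 = A ^ 2 - 4 * z ^ 2 := by rw [hs2, hA]; ring
    have hsA : s < A := by nlinarith [mul_pos hz0 hz0]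
    have hT : T1 z = (A - s) / (2 * z ^ 2) := by rw [T1, ← hs, ← hA]
    have hz2 : (z : ℝ) ^ 2 ≠ 0 := pow_ne_zero 2 (ne_of_gt hz0)
    have hZ : zeta1 z = (A - s) ^ 2 / (4 * z ^ 2 - (A - s) ^ 2) := by
      rw [zeta1, hT]
      have e1 : z ^ 2 * ((A - s) / (2 * z ^ 2)) ^ 2 = (A - s) ^ 2 / (4 * z ^ 2) := by
        field_simp
        ring
      have e2 : 1 - z ^ 2 - z ^ 2 * (((A - s) / (2 * z ^ 2)) ^ 2 - 1)
          = (4 * z ^ 2 - (A - s) ^ 2) / (4 * z ^ 2) := by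
        field_simp
        ring
      rw [e1, e2]
      rcases eq_or_ne (4 * z ^ 2 - (A - s) ^ 2) 0 with h0 | h0
      · rw [h0]; simp
      · have h4z : (4 * z ^ 2 : ℝ) ≠ 0 := by positivity
        field_simp
    rw [← hA]
    constructor
    · intro hzeq
      rw [hZ] at hzeq
      obtain ⟨w, hwdef⟩ : ∃ w : ℝ, w = A - s := ⟨_, rfl⟩
      rw [← hwdef] at hzeq
      have hw0 : 0 < w := by rw [hwdef]; linarith
      have hE : 4 * z ^ 2 - w ^ 2 ≠ 0 := by
        intro h0
        rw [h0, div_zero] at hzeq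
        exact absurd hzeq.symm (ne_of_gt hρ0)
      have hNE : w ^ 2 = ρ * (4 * z ^ 2 - w ^ 2) := (div_eq_iff hE).mp hzeq
      have hw1 : w ^ 2 * (1 + ρ) = 4 * ρ * z ^ 2 := by linear_combination hNE
      have hsw : s = A - w := by rw [hwdef]; ring
      have hw2 : 2 * A * w = w ^ 2 + 4 * z ^ 2 := by
        linear_combination (s + A - w) * hsw - hAs
      have h4 : (1 + ρ) * (w ^ 2 + 4 * z ^ 2) = 4 * z ^ 2 * (1 + 2 * ρ) := by
        linear_combination hw1
      have h6 : ((1 + ρ) * (2 * A * w)) ^ 2 = (4 * z ^ 2 * (1 + 2 * ρ)) ^ 2 := by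
        rw [hw2, h4]
      have h7 : 16 * z ^ 2 * (ρ * (1 + ρ) * A ^ 2) = 16 * z ^ 2 * ((1 + 2 * ρ) ^ 2 * z ^ 2) := by
        linear_combination h6 - (4 * A ^ 2 * (1 + ρ)) * hw1
      exact mul_left_cancel₀ (by positivity) h7
    · intro hP
      obtain ⟨c, hcdef⟩ : ∃ c : ℝ, c = Real.sqrt (ρ / (1 + ρ)) := ⟨_, rfl⟩
      have h1ρ : (0 : ℝ) < 1 + ρ := by linarith
      have hc0 : 0 < c := by rw [hcdef]; exact Real.sqrt_pos.mpr (by positivity)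
      have hc2 : c ^ 2 = ρ / (1 + ρ) := by rw [hcdef]; exact Real.sq_sqrt (by positivity)
      have hcρ : c ^ 2 * (1 + ρ) = ρ := by rw [hc2]; field_simp
      have hc1 : c < 1 := by
        have h : c ^ 2 < 1 := by
          rw [hc2, div_lt_one h1ρ]; linarith
        exact (pow_lt_one_iff_of_nonneg hc0.le two_ne_zero).mp h
      have h8 : ((c * A) * (1 + ρ)) ^ 2 = ((z * (1 + c ^ 2)) * (1 + ρ)) ^ 2 := by
        linear_combination hP + ((1 + ρ) * A ^ 2 - z ^ 2 * ((1 + c ^ 2) * (1 + ρ) + (1 + 2 * ρ))) * hcρ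
      have h9 : (c * A) * (1 + ρ) = (z * (1 + c ^ 2)) * (1 + ρ) := by
        have hl : 0 ≤ (c * A) * (1 + ρ) := by positivity
        have hrr : 0 ≤ (z * (1 + c ^ 2)) * (1 + ρ) := by positivity
        calc (c * A) * (1 + ρ) = Real.sqrt (((c * A) * (1 + ρ)) ^ 2) := (Real.sqrt_sq hl).symm
          _ = Real.sqrt (((z * (1 + c ^ 2)) * (1 + ρ)) ^ 2) := by rw [h8]
          _ = (z * (1 + c ^ 2)) * (1 + ρ) := Real.sqrt_sq hrr
      have hAc : c * A = z * (1 + c ^ 2) := mul_right_cancel₀ (ne_of_gt h1ρ) h9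
      have h10 : c * (A - 2 * c * z) = z * (1 - c ^ 2) := by linear_combination hAc
      have hc2' : (0 : ℝ) < 1 - c ^ 2 := by
        have h := mul_pos (sub_pos.mpr hc1) (show (0:ℝ) < 1 + c by linarith)
        have he : (1 - c) * (1 + c) = 1 - c ^ 2 := by ring
        rwa [he] at h
      have hA2z : 0 < A - 2 * c * z := by
        have he : A - 2 * c * z = z * (1 - c ^ 2) / c := by
          field_simp
          linear_combination h10
        rw [he]
        positivity
      have hΔe : (A - 2 * c * z) ^ 2 = 1 - 2 * z - z ^ 2 - 2 * z ^ 3 + z ^ 4 := by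
        linear_combination (-4 * z) * hAc + (A + (1 - z + z ^ 2)) * hA
      have hseq : s = A - 2 * c * z := by
        rw [hs, ← hΔe, Real.sqrt_sq hA2z.le]
      have hAsw : A - s = 2 * c * z := by rw [hseq]; ring
      rw [hZ, hAsw]
      have hden : 4 * z ^ 2 - (2 * c * z) ^ 2 ≠ 0 := by
        have h4 : 4 * z ^ 2 - (2 * c * z) ^ 2 = 4 * z ^ 2 * (1 - c ^ 2) := by ring
        rw [h4]
        positivity
      rw [div_eq_iff hden]
      linear_combination (4 * z ^ 2) * hcρ
  -- strict monotonicity of P on (0, 1/2)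
  have hmono : ∀ x y : ℝ, 0 < x → x < y → y < 0.5 →
      (1 + 2 * ρ) ^ 2 * y ^ 2 - ρ * (1 + ρ) * (1 - y + y ^ 2) ^ 2
        > (1 + 2 * ρ) ^ 2 * x ^ 2 - ρ * (1 + ρ) * (1 - x + x ^ 2) ^ 2 := by
    intro x y hx hxy hy
    have h1 : (1 - y + y ^ 2) ≤ (1 - x + x ^ 2) := by
      nlinarith [mul_nonneg (by linarith : (0:ℝ) ≤ y - x) (by linarith : (0:ℝ) ≤ 1 - x - y)]
    have h2 : (0 : ℝ) < 1 - y + y ^ 2 := by nlinarith [sq_nonneg (1 - y)]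
    have h3 : (1 : ℝ) ≤ (1 + 2 * ρ) ^ 2 := by nlinarith
    have h4 : x ^ 2 < y ^ 2 := by nlinarith
    have h5 : (1 - y + y ^ 2) ^ 2 ≤ (1 - x + x ^ 2) ^ 2 := pow_le_pow_left₀ h2.le h1 2
    have h1ρ' : (0 : ℝ) < 1 + ρ := by linarith
    nlinarith [mul_le_mul_of_nonneg_left h5 (by positivity : (0:ℝ) ≤ ρ * (1 + ρ)),
      mul_lt_mul_of_pos_left h4 (by positivity : (0:ℝ) < (1 + 2 * ρ) ^ 2)]
  -- existence of the root via IVT on [0.2867, 0.28675]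
  have hc : ContinuousOn (fun z : ℝ => ρ * (1 + ρ) * (1 - z + z ^ 2) ^ 2 - (1 + 2 * ρ) ^ 2 * z ^ 2)
      (Set.Icc (0.2867 : ℝ) 0.28675) := by fun_prop
  have hPa : 0 < ρ * (1 + ρ) * (1 - 0.2867 + 0.2867 ^ 2) ^ 2 - (1 + 2 * ρ) ^ 2 * 0.2867 ^ 2 := by
    nlinarith [sq_nonneg (ρ - 0.2214), sq_nonneg ρ]
  have hPb : ρ * (1 + ρ) * (1 - 0.28675 + 0.28675 ^ 2) ^ 2 - (1 + 2 * ρ) ^ 2 * 0.28675 ^ 2 < 0 := by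
    nlinarith [sq_nonneg (ρ - 0.2215), sq_nonneg ρ]
  have h0mem : (0 : ℝ) ∈ Set.Ioo
      ((fun z : ℝ => ρ * (1 + ρ) * (1 - z + z ^ 2) ^ 2 - (1 + 2 * ρ) ^ 2 * z ^ 2) 0.28675)
      ((fun z : ℝ => ρ * (1 + ρ) * (1 - z + z ^ 2) ^ 2 - (1 + 2 * ρ) ^ 2 * z ^ 2) 0.2867) :=
    ⟨hPb, hPa⟩
  obtain ⟨γ, hγmem, hγ0⟩ := intermediate_value_Ioo' (by norm_num : (0.2867:ℝ) ≤ 0.28675) hc h0mem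
  have hγa : (0.2867 : ℝ) < γ := hγmem.1
  have hγb : γ < (0.28675 : ℝ) := hγmem.2
  have hγIoo : γ ∈ Set.Ioo (0 : ℝ) r := ⟨by linarith, by linarith⟩
  have hγP : ρ * (1 + ρ) * (1 - γ + γ ^ 2) ^ 2 = (1 + 2 * ρ) ^ 2 * γ ^ 2 := by
    have := hγ0
    simp only at this
    linarith
  refine ⟨γ, hγIoo, (hkey γ hγIoo).mpr hγP, ?_, ?_, ?_⟩
  · intro γ' hγ' hζ'
    have hP' : ρ * (1 + ρ) * (1 - γ' + γ' ^ 2) ^ 2 = (1 + 2 * ρ) ^ 2 * γ' ^ 2 :=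
      (hkey γ' hγ').mp hζ'
    rcases lt_trichotomy γ' γ with h | h | h
    · exfalso
      have := hmono γ' γ hγ'.1 h (by linarith)
      nlinarith [hP', hγP]
    · exact h
    · exfalso
      have := hmono γ γ' hγIoo.1 h (by linarith [hγ'.2])
      nlinarith [hP', hγP]
  · have hγpos : (0 : ℝ) < γ := by linarith
    have hinv : γ * γ⁻¹ = 1 := mul_inv_cancel₀ (ne_of_gt hγpos)
    nlinarith [hinv, inv_pos.mpr hγpos]
  · have hγpos : (0 : ℝ) < γ := by linarith
    have hinv : γ * γ⁻¹ = 1 := mul_inv_cancel₀ (ne_of_gt hγpos)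
    nlinarith [hinv, inv_pos.mpr hγpos]
end
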